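/- Let P and Q be probability measures with P ≪ Q, β₂ = ess inf dP/dQ > 0, and let X ∼ P. For the convex function f(t) = −ln t: β₂·D(Q‖P) ≤ ln(1 + χ²(P‖Q)) − D(P‖Q) ≤ (1/β₁)·D(Q‖P), where β₁ = (ess sup dP/dQ)⁻¹ ∈ (0,1). -/

import Mathlib

/-!
Write `r = dP/dQ`, so that `m ≤ r ≤ M` `Q`-a.e. for `m = ess inf r`, `M = ess sup r`, and
`c := 1 + χ²(P‖Q) = ∫ r² dQ`. Since `D(P‖Q) = ∫ r log r dQ` and `D(Q‖P) = -∫ log r dQ`,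
`D(P‖Q) + m D(Q‖P) = ∫ (r - m) log r dQ` and `-(D(P‖Q) + M D(Q‖P)) = ∫ (M - r) log r dQ`,
integrals of `log r` against nonnegative weights. Integrating the tangent-line bound
`log r ≤ log a + r / a - 1` against these weights, at `a = c` and at `a = 1` respectively,
bounds the first by `log c` and the second by `-log c`.
-/

open MeasureTheory Set Real

section Integrals

variable {α : Type*} [MeasurableSpace α] {μ : Measure α}

lemma integral_mul_log_le {w r : α → ℝ} {a : ℝ} (ha : 0 < a) (hw : 0 ≤ᵐ[μ] w)
    (hr : ∀ᵐ x ∂μ, 0 < r x) (hwi : Integrable w μ) (hwri : Integrable (fun x ↦ w x * r x) μ)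
    (hwli : Integrable (fun x ↦ w x * log (r x)) μ) :
    ∫ x, w x * log (r x) ∂μ ≤ (log a - 1) * ∫ x, w x ∂μ + (∫ x, w x * r x ∂μ) / a := by
  have htangent : ∀ᵐ x ∂μ, w x * log (r x) ≤ (log a - 1) * w x + w x * r x / a := by
    filter_upwards [hw, hr] with x hwx hrx
    have h := log_le_sub_one_of_pos (div_pos hrx ha)
    rw [log_div hrx.ne' ha.ne'] at h
    calc w x * log (r x) ≤ w x * (log a - 1 + r x / a) := by gcongr; linarith
      _ = _ := by ring
  calc ∫ x, w x * log (r x) ∂μ ≤ ∫ x, ((log a - 1) * w x + w x * r x / a) ∂μ :=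
        integral_mono_ae hwli ((hwi.const_mul _).add (hwri.div_const a)) htangent
    _ = _ := by
        rw [integral_add (hwi.const_mul _) (hwri.div_const a), integral_const_mul, integral_div]

lemma integral_sub_mul {f g : α → ℝ} (a : ℝ) (hfg : Integrable (fun x ↦ f x * g x) μ)
    (hg : Integrable g μ) :
    ∫ x, (f x - a) * g x ∂μ = ∫ x, f x * g x ∂μ - a * ∫ x, g x ∂μ := by
  simp_rw [sub_mul]
  rw [integral_sub hfg (hg.const_mul a), integral_const_mul]

lemma integral_const_sub_mul {f g : α → ℝ} (a : ℝ) (hfg : Integrable (fun x ↦ f x * g x) μ)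
    (hg : Integrable g μ) :
    ∫ x, (a - f x) * g x ∂μ = a * ∫ x, g x ∂μ - ∫ x, f x * g x ∂μ := by
  simp_rw [sub_mul]
  rw [integral_sub (hg.const_mul a) hfg, integral_const_mul]

lemma integrable_comp_of_ae_mem_Icc [IsFiniteMeasure μ] {r : α → ℝ} {m M : ℝ} {g : ℝ → ℝ}
    (hg : Measurable g) (hgc : ContinuousOn g (Icc m M)) (hr : Measurable r)
    (hrb : ∀ᵐ x ∂μ, r x ∈ Icc m M) : Integrable (fun x ↦ g (r x)) μ := by
  obtain ⟨C, hC⟩ := isCompact_Icc.exists_bound_of_continuousOn hgc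
  exact .of_bound (hg.comp hr).aestronglyMeasurable C (hrb.mono fun x hx ↦ hC _ hx)

end Integrals

section BoundedDensity

variable {α : Type*} [MeasurableSpace α] {μ : Measure α} [IsProbabilityMeasure μ]
  {r : α → ℝ} {m M : ℝ}

lemma integral_mul_self_eq_one_add_integral_sq (hri : Integrable r μ)
    (hrri : Integrable (fun x ↦ r x * r x) μ) (hr1 : ∫ x, r x ∂μ = 1) :
    ∫ x, r x * r x ∂μ = 1 + ∫ x, (r x - 1) ^ 2 ∂μ := by
  have hlin : Integrable (fun x ↦ 2 * r x - 1) μ := (hri.const_mul 2).sub (integrable_const 1)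
  have hsq : ∫ x, (r x - 1) ^ 2 ∂μ = ∫ x, r x * r x ∂μ - 1 := by
    calc ∫ x, (r x - 1) ^ 2 ∂μ = ∫ x, (r x * r x - (2 * r x - 1)) ∂μ := by congr 1; ring_nf
      _ = ∫ x, r x * r x ∂μ - ∫ x, (2 * r x - 1) ∂μ := integral_sub hrri hlin
      _ = ∫ x, r x * r x ∂μ - 1 := by
        rw [integral_sub (hri.const_mul 2) (integrable_const 1), integral_const_mul, hr1]
        norm_num
  linarith

lemma mul_neg_integral_log_le (hm : 0 < m) (hr : Measurable r) (hrb : ∀ᵐ x ∂μ, r x ∈ Icc m M)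
    (hr1 : ∫ x, r x ∂μ = 1) :
    m * -∫ x, log (r x) ∂μ ≤ log (1 + ∫ x, (r x - 1) ^ 2 ∂μ) - ∫ x, r x * log (r x) ∂μ := by
  set c := 1 + ∫ x, (r x - 1) ^ 2 ∂μ
  have hc : 0 < c := by positivity
  have hlog : ContinuousOn log (Icc m M) :=
    continuousOn_log.mono fun t ht ↦ (hm.trans_le ht.1).ne'
  have hri : Integrable r μ := integrable_comp_of_ae_mem_Icc measurable_id continuousOn_id hr hrb
  have hrri : Integrable (fun x ↦ r x * r x) μ :=
    integrable_comp_of_ae_mem_Icc (g := fun t ↦ t * t) (by fun_prop) (by fun_prop) hr hrb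
  have hli : Integrable (fun x ↦ log (r x)) μ :=
    integrable_comp_of_ae_mem_Icc measurable_log hlog hr hrb
  have hrli : Integrable (fun x ↦ r x * log (r x)) μ :=
    integrable_comp_of_ae_mem_Icc (g := fun t ↦ t * log t) (by fun_prop)
      (continuousOn_id.mul hlog) hr hrb
  have hw : ∫ x, (r x - m) ∂μ = 1 - m := by
    rw [integral_sub hri (integrable_const m), hr1]
    simp
  have hwr : ∫ x, (r x - m) * r x ∂μ = c - m := by
    rw [integral_sub_mul m hrri hri, integral_mul_self_eq_one_add_integral_sq hri hrri hr1, hr1]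
    ring
  have hbound := integral_mul_log_le (w := fun x ↦ r x - m) hc
    (hrb.mono fun x hx ↦ sub_nonneg.2 hx.1) (hrb.mono fun x hx ↦ hm.trans_le hx.1)
    (hri.sub (integrable_const m))
    (integrable_comp_of_ae_mem_Icc (g := fun t ↦ (t - m) * t) (by fun_prop) (by fun_prop) hr hrb)
    (integrable_comp_of_ae_mem_Icc (g := fun t ↦ (t - m) * log t) (by fun_prop)
      ((continuousOn_id.sub continuousOn_const).mul hlog) hr hrb)
  have hcm : (c - m) / c = 1 - m * c⁻¹ := by field_simp
  rw [hw, hwr, hcm, integral_sub_mul m hrli hli] at hbound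
  linarith [mul_le_mul_of_nonneg_left (one_sub_inv_le_log_of_pos hc) hm.le]

lemma log_one_add_sub_le_mul_neg_integral_log (hm : 0 < m) (hr : Measurable r)
    (hrb : ∀ᵐ x ∂μ, r x ∈ Icc m M) (hr1 : ∫ x, r x ∂μ = 1) :
    log (1 + ∫ x, (r x - 1) ^ 2 ∂μ) - ∫ x, r x * log (r x) ∂μ ≤ M * -∫ x, log (r x) ∂μ := by
  set c := 1 + ∫ x, (r x - 1) ^ 2 ∂μ
  have hc : 0 < c := by positivity
  have hlog : ContinuousOn log (Icc m M) :=
    continuousOn_log.mono fun t ht ↦ (hm.trans_le ht.1).ne'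
  have hri : Integrable r μ := integrable_comp_of_ae_mem_Icc measurable_id continuousOn_id hr hrb
  have hrri : Integrable (fun x ↦ r x * r x) μ :=
    integrable_comp_of_ae_mem_Icc (g := fun t ↦ t * t) (by fun_prop) (by fun_prop) hr hrb
  have hli : Integrable (fun x ↦ log (r x)) μ :=
    integrable_comp_of_ae_mem_Icc measurable_log hlog hr hrb
  have hrli : Integrable (fun x ↦ r x * log (r x)) μ :=
    integrable_comp_of_ae_mem_Icc (g := fun t ↦ t * log t) (by fun_prop)
      (continuousOn_id.mul hlog) hr hrb
  have hw : ∫ x, (M - r x) ∂μ = M - 1 := by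
    rw [integral_sub (integrable_const M) hri, hr1]
    simp
  have hwr : ∫ x, (M - r x) * r x ∂μ = M - c := by
    rw [integral_const_sub_mul M hrri hri, integral_mul_self_eq_one_add_integral_sq hri hrri hr1,
      hr1]
    ring
  have hbound := integral_mul_log_le (w := fun x ↦ M - r x) one_pos
    (hrb.mono fun x hx ↦ sub_nonneg.2 hx.2) (hrb.mono fun x hx ↦ hm.trans_le hx.1)
    ((integrable_const M).sub hri)
    (integrable_comp_of_ae_mem_Icc (g := fun t ↦ (M - t) * t) (by fun_prop) (by fun_prop) hr hrb)
    (integrable_comp_of_ae_mem_Icc (g := fun t ↦ (M - t) * log t) (by fun_prop)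
      ((continuousOn_const.sub continuousOn_id).mul hlog) hr hrb)
  rw [log_one, div_one, hw, hwr, integral_const_sub_mul M hrli hli] at hbound
  linarith [log_le_sub_one_of_pos hc]

end BoundedDensity

lemma ae_toReal_mem_Icc_essInf_essSup {α : Type*} [MeasurableSpace α] {μ : Measure α}
    {f : α → ENNReal} (hf : essSup f μ ≠ ⊤) :
    ∀ᵐ x ∂μ, (f x).toReal ∈ Icc (essInf f μ).toReal (essSup f μ).toReal := by
  filter_upwards [ae_essInf_le (f := f), ENNReal.ae_le_essSup f] with x hinf hsup
  have hx : f x ≠ ⊤ := ne_top_of_le_ne_top hf hsup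
  exact ⟨ENNReal.toReal_mono hx hinf, ENNReal.toReal_mono hf hsup⟩

lemma essInf_le_essSup {α : Type*} [MeasurableSpace α] {μ : Measure α} [NeZero μ]
    (f : α → ENNReal) : essInf f μ ≤ essSup f μ := by
  obtain ⟨x, hinf, hsup⟩ :=
    ((ae_essInf_le (f := f)).and (ENNReal.ae_le_essSup (μ := μ) f)).exists
  exact hinf.trans hsup

theorem log_one_add_chiSq_sub_relEntropy_bounds_general {α : Type*} [MeasurableSpace α]
    (P Q : Measure α) [IsProbabilityMeasure P] [IsProbabilityMeasure Q]
    (hPQ : P ≪ Q) (hQP : Q ≪ P)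
    (hM' : essSup (P.rnDeriv Q) Q ≠ ⊤)
    (hm0 : 0 < essInf (P.rnDeriv Q) Q) :
    (essInf (P.rnDeriv Q) Q).toReal * ∫ x, Real.log ((Q.rnDeriv P x).toReal) ∂Q
        ≤ Real.log (1 + ∫ x, ((P.rnDeriv Q x).toReal - 1) ^ 2 ∂Q)
            - ∫ x, Real.log ((P.rnDeriv Q x).toReal) ∂P
      ∧ Real.log (1 + ∫ x, ((P.rnDeriv Q x).toReal - 1) ^ 2 ∂Q)
            - ∫ x, Real.log ((P.rnDeriv Q x).toReal) ∂P
        ≤ (essSup (P.rnDeriv Q) Q).toReal * ∫ x, Real.log ((Q.rnDeriv P x).toReal) ∂Q := by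
  have hr : Measurable fun x ↦ (P.rnDeriv Q x).toReal :=
    (Measure.measurable_rnDeriv P Q).ennreal_toReal
  have hrb := ae_toReal_mem_Icc_essInf_essSup hM'
  have hm : 0 < (essInf (P.rnDeriv Q) Q).toReal :=
    ENNReal.toReal_pos hm0.ne' (ne_top_of_le_ne_top hM' (essInf_le_essSup _))
  have hr1 : ∫ x, (P.rnDeriv Q x).toReal ∂Q = 1 := by
    simp [Measure.integral_toReal_rnDeriv hPQ]
  have hDPQ : ∫ x, log (P.rnDeriv Q x).toReal ∂P
      = ∫ x, (P.rnDeriv Q x).toReal * log (P.rnDeriv Q x).toReal ∂Q := by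
    simpa using (integral_rnDeriv_smul hPQ (f := fun x ↦ log (P.rnDeriv Q x).toReal)).symm
  have hDQP : ∫ x, log (Q.rnDeriv P x).toReal ∂Q = -∫ x, log (P.rnDeriv Q x).toReal ∂Q := by
    rw [← integral_neg]
    refine integral_congr_ae ?_
    filter_upwards [neg_llr hQP] with x hx
    simp only [Pi.neg_apply, llr] at hx
    linarith
  rw [hDQP, hDPQ]
  exact ⟨mul_neg_integral_log_le hm hr hrb hr1,
    log_one_add_sub_le_mul_neg_integral_log hm hr hrb hr1⟩

theorem log_one_add_chiSq_sub_relEntropy_bounds {α : Type*} [MeasurableSpace α]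
    (P Q : Measure α) [IsProbabilityMeasure P] [IsProbabilityMeasure Q]
    (hPQ : P ≪ Q) (hQP : Q ≪ P)
    (hM : 1 < essSup (P.rnDeriv Q) Q) (hM' : essSup (P.rnDeriv Q) Q ≠ ⊤)
    (hm0 : 0 < essInf (P.rnDeriv Q) Q) (hm1 : essInf (P.rnDeriv Q) Q < 1) :
    (essInf (P.rnDeriv Q) Q).toReal * ∫ x, Real.log ((Q.rnDeriv P x).toReal) ∂Q
        ≤ Real.log (1 + ∫ x, ((P.rnDeriv Q x).toReal - 1) ^ 2 ∂Q)
            - ∫ x, Real.log ((P.rnDeriv Q x).toReal) ∂P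
      ∧ Real.log (1 + ∫ x, ((P.rnDeriv Q x).toReal - 1) ^ 2 ∂Q)
            - ∫ x, Real.log ((P.rnDeriv Q x).toReal) ∂P
        ≤ (essSup (P.rnDeriv Q) Q).toReal * ∫ x, Real.log ((Q.rnDeriv P x).toReal) ∂Q :=
  log_one_add_chiSq_sub_relEntropy_bounds_general P Q hPQ hQP hM' hm0
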